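/- arXiv:2203.12549 — 2 statements merged into one kernel-verified Lean document; each statement's English description precedes it below -/
import Mathlib

section
/- Let G be a graph, D a double circuit of B(G), and let S be a subdivision class of G[D] (the edge set of a path in G[D] all of whose internal vertices have degree 2 in G[D], with endpoints of degree ≥ 3). Then S is contained in a single part of the circuit partition of D. -/
open Set

namespace Paper

/-! ### Multigraphs, walks, cycles -/

/-- A multigraph on vertex type `V` with edge type `E`: each edge has an
unordered pair of endpoints (possibly equal, giving a loop). -/
structure Multigraph (V : Type*) (E : Type*) where
  inc : E → Sym2 V

namespace Multigraph

variable {V E : Type*}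

/-- `G.IsWalk I u es vs`: starting at vertex `u` and using only edges in `I`,
the edges `es` form a walk that successively visits the vertices `vs`. -/
inductive IsWalk (G : Multigraph V E) (I : Set E) : V → List E → List V → Prop
  | nil (v : V) : IsWalk G I v [] []
  | cons {u v : V} {e : E} {es : List E} {vs : List V} :
      e ∈ I → G.inc e = s(u, v) → IsWalk G I v es vs → IsWalk G I u (e :: es) (v :: vs)

/-- A walk from `u` to `w` inside the edge set `I`. -/
def IsWalkFrom (G : Multigraph V E) (I : Set E) (u : V) (es : List E) (vs : List V)
    (w : V) : Prop :=
  G.IsWalk I u es vs ∧ (u :: vs).getLast (by simp) = w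

/-- `u` and `w` are joined by a walk using edges of `I` (same component of `G[I]`). -/
def Reachable (G : Multigraph V E) (I : Set E) (u w : V) : Prop :=
  ∃ es vs, G.IsWalkFrom I u es vs w

/-- A cycle based at `v` using edges of `I`: a nonempty closed walk with no repeated
edges and no repeated vertices (except for the base point).  A loop is a cycle of
length `1` and a pair of parallel edges forms a cycle of length `2`. -/
def IsCycle (G : Multigraph V E) (I : Set E) (v : V) (es : List E) (vs : List V) : Prop :=
  G.IsWalkFrom I v es vs v ∧ es ≠ [] ∧ es.Nodup ∧ vs.Nodup

/-- `C` is the edge set of a cycle of the subgraph `G[I]`. -/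
def IsCycleIn (G : Multigraph V E) (I : Set E) (C : Set E) : Prop :=
  ∃ v es vs, G.IsCycle I v es vs ∧ C = {e | e ∈ es}

/-- A path from `u` to `w`: a walk with pairwise distinct vertices. -/
def IsPath (G : Multigraph V E) (I : Set E) (u : V) (es : List E) (vs : List V)
    (w : V) : Prop :=
  G.IsWalkFrom I u es vs w ∧ (u :: vs).Nodup

/-- The vertices covered by an edge set `D`; the vertex set of `G[D]`. -/
def verts (G : Multigraph V E) (D : Set E) : Set V := {v | ∃ e ∈ D, v ∈ G.inc e}

/-- The degree of `v` in the subgraph `G[D]` (loops count twice). -/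
noncomputable def degree (G : Multigraph V E) (D : Set E) (v : V) : ℕ :=
  {e ∈ D | v ∈ G.inc e}.ncard + {e ∈ D | G.inc e = s(v, v)}.ncard

/-- Every connected component of `G[I]` contains at most one cycle:
any two cycles of `G[I]` lying in the same component coincide. -/
def BicircIndep (G : Multigraph V E) (I : Set E) : Prop :=
  ∀ C₁ C₂ : Set E, G.IsCycleIn I C₁ → G.IsCycleIn I C₂ →
    (∃ u w, u ∈ G.verts C₁ ∧ w ∈ G.verts C₂ ∧ G.Reachable I u w) → C₁ = C₂

/-- `M` is the bicircular matroid `B(G)` of the multigraph `G`. -/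
def IsBicircularOf (G : Multigraph V E) (M : Matroid E) : Prop :=
  M.E = univ ∧ ∀ I : Set E, M.Indep I ↔ G.BicircIndep I

end Multigraph

/-! ### Matroid notions -/

variable {α : Type*}

/-- The (extended) rank of a set in a matroid. -/
noncomputable def eRk (M : Matroid α) (X : Set α) : ℕ∞ :=
  ⨆ I ∈ {I | M.Indep I ∧ I ⊆ X}, I.encard

/-- A circuit: a minimal dependent set. -/
def Circuit (M : Matroid α) (C : Set α) : Prop :=
  M.Dep C ∧ ∀ D ⊂ C, ¬ M.Dep D

/-- A double circuit: a finite set `D` with `r(D) = |D| - 2` whose rank does not drop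
when any single element is removed. -/
def DoubleCircuit (M : Matroid α) (D : Set α) : Prop :=
  D ⊆ M.E ∧ D.Finite ∧ eRk M D + 2 = D.encard ∧ ∀ d ∈ D, eRk M (D \ {d}) = eRk M D

/-- `f` is a circuit partition of `D`: a partition of `D` into nonempty parts such that the
circuits of `M` contained in `D` are exactly the complements in `D` of the parts. -/
def CircuitPartition (M : Matroid α) (D : Set α) {k : ℕ} (f : Fin k → Set α) : Prop :=
  (∀ i, (f i).Nonempty) ∧ (∀ i j : Fin k, i ≠ j → Disjoint (f i) (f j)) ∧
    (⋃ i, f i) = D ∧ ∀ C : Set α, (Circuit M C ∧ C ⊆ D) ↔ ∃ i, C = D \ f i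

/-- A part of a partition is singular if it has exactly one element. -/
def PositiveDoubleCircuit (M : Matroid α) (D : Set α) : Prop :=
  DoubleCircuit M D ∧ ∃ (k : ℕ) (f : Fin k → Set α), CircuitPartition M D f ∧
    {i : Fin k | (f i).encard ≠ 1}.ncard < {i : Fin k | (f i).encard = 1}.ncard

/-- A hyperplane (copoint): a maximal proper flat. -/
def Hyperplane (M : Matroid α) (H : Set α) : Prop :=
  M.IsFlat H ∧ H ≠ M.E ∧ ∀ F, M.IsFlat F → H ⊂ F → F = M.E

/-- A coline: a flat of rank `r(M) - 2`. -/
def Coline (M : Matroid α) (L : Set α) : Prop :=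
  M.IsFlat L ∧ eRk M L + 2 = eRk M M.E

/-- A positive coline: more simple copoints on `L` than multiple copoints on `L`. -/
def PositiveColine (M : Matroid α) (L : Set α) : Prop :=
  Coline M L ∧
    {H | Hyperplane M H ∧ L ⊆ H ∧ (H \ L).encard ≠ 1}.ncard <
      {H | Hyperplane M H ∧ L ⊆ H ∧ (H \ L).encard = 1}.ncard

/-- Deletion of a set of elements. -/
def delete (M : Matroid α) (D : Set α) : Matroid α := M.restrict (M.E \ D)

/-- Contraction of a set of elements. -/
def contract (M : Matroid α) (C : Set α) : Matroid α := (delete M✶ C)✶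

/-- `N` is a minor of `M`. -/
def IsMinorOf (N M : Matroid α) : Prop := ∃ C D : Set α, N = delete (contract M C) D

/-- `M` is (isomorphic to) the uniform matroid `U_{r,n}`. -/
def IsUniform (r n : ℕ) {β : Type*} (M : Matroid β) : Prop :=
  M.E.encard = n ∧ ∀ I ⊆ M.E, (M.Indep I ↔ I.encard ≤ (r : ℕ∞))

/-- A simple matroid: every set of at most two elements of the ground set is independent. -/
def IsSimple (M : Matroid α) : Prop := ∀ X ⊆ M.E, X.encard ≤ 2 → M.Indep X

/-! If `e = xv` lies in a circuit `C` of `B(G)` and no other edge of `C` meets `v`, then no cycle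
of `G[C]` passes through `e`, and walks of `G[C]` between vertices other than `v` can be rerouted
to avoid `e`; so `C \ {e}` would still be dependent. Hence every vertex of a non-loop edge of a
circuit meets a second edge of that circuit. At an internal vertex of the path, which has degree
`2` in `G[D]`, that second edge must be the neighbouring path edge, so a circuit inside `D`
containing one edge of the path contains all of them. As the circuits inside `D` are exactly the
complements of the parts, the path cannot meet two different parts. -/

namespace Multigraph

variable {V E : Type*} {G : Multigraph V E} {I : Set E} {e : E} {u v x : V}
  {es : List E} {vs : List V}

lemma IsWalk.edge_mem (h : G.IsWalk I u es vs) {a : E} (ha : a ∈ es) : a ∈ I := by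
  induction h with
  | nil => simp at ha
  | cons he _ _ ih =>
    rcases List.mem_cons.1 ha with rfl | ha
    exacts [he, ih ha]

lemma IsWalk.diff_singleton (h : G.IsWalk I u es vs) (he : e ∉ es) :
    G.IsWalk (I \ {e}) u es vs := by
  induction h with
  | nil => exact .nil _
  | cons hm hinc _ ih =>
    simp only [List.mem_cons, not_or] at he
    exact .cons ⟨hm, Ne.symm he.1⟩ hinc (ih he.2)

lemma Reachable.refl (I : Set E) (u : V) : G.Reachable I u u := ⟨[], [], .nil u, rfl⟩

lemma Reachable.cons {w : V} (he : e ∈ I) (hinc : G.inc e = s(u, v))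
    (h : G.Reachable I v w) : G.Reachable I u w := by
  obtain ⟨es, vs, hw, hlast⟩ := h
  exact ⟨e :: es, v :: vs, .cons he hinc hw, by rw [List.getLast_cons_cons, hlast]⟩

lemma IsWalk.not_mem_of_pendant (hv : ∀ e' ∈ I, v ∈ G.inc e' → e' = e)
    (h : G.IsWalk I u es vs) : u ≠ v → e ∉ es → v ∉ u :: vs := by
  induction h with
  | nil => simp +contextual [eq_comm]
  | @cons u v₁ e₀ es vs hm hinc _ ih =>
    intro hu he hmem
    simp only [List.mem_cons, not_or] at he
    have hv₁ : v₁ ≠ v := by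
      rintro rfl
      exact he.1 (hv e₀ hm (by simp [hinc])).symm
    rcases List.mem_cons.1 hmem with h | h
    exacts [hu h.symm, ih hv₁ he.2 h]

lemma IsWalk.getLast_eq_of_pendant (hv : ∀ e' ∈ I, v ∈ G.inc e' → e' = e)
    (hve : v ∈ G.inc e) (h : G.IsWalk I u es vs) :
    u ≠ v → es.Nodup → e ∈ es → (u :: vs).getLast (by simp) = v := by
  induction h with
  | nil => simp
  | @cons u v₁ e₀ es vs hm hinc hrest ih =>
    intro hu hnd he
    rw [List.getLast_cons_cons]
    by_cases he₀ : e₀ = e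
    · have hv₁ : v₁ = v := by
        rw [← he₀, hinc, Sym2.mem_iff] at hve
        exact (hve.resolve_left (Ne.symm hu)).symm
      subst hv₁
      cases hrest with
      | nil => rfl
      | cons hm₁ hinc₁ _ =>
        have := hv _ hm₁ (by simp [hinc₁])
        simp [he₀, this] at hnd
    · have hv₁ : v₁ ≠ v := by
        rintro rfl
        exact he₀ (hv e₀ hm (by simp [hinc]))
      exact ih hv₁ (List.nodup_cons.1 hnd).2 ((List.mem_cons.1 he).resolve_left (Ne.symm he₀))

lemma IsCycle.not_mem_of_pendant (hv : ∀ e' ∈ I, v ∈ G.inc e' → e' = e)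
    (hx : G.inc e = s(x, v)) (hxv : x ≠ v) {v₀ : V} (hc : G.IsCycle I v₀ es vs) : e ∉ es := by
  intro he
  obtain ⟨⟨hw, hlast⟩, -, hnd, -⟩ := hc
  by_cases hv₀ : v₀ = v
  · subst hv₀
    cases hw with
    | nil => simp at he
    | @cons _ v₁ e₀ es vs hm hinc hrest =>
      have he₀ : e₀ = e := hv e₀ hm (by simp [hinc])
      have hv₁ : v₁ = x := by
        rw [he₀, hx, Sym2.eq_iff] at hinc
        rcases hinc with ⟨h, -⟩ | ⟨h, -⟩
        exacts [absurd h hxv, h.symm]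
      subst he₀ hv₁
      rw [List.getLast_cons_cons] at hlast
      exact hrest.not_mem_of_pendant hv hxv (List.nodup_cons.1 hnd).1
        (hlast ▸ List.getLast_mem _)
  · exact hv₀ (hlast ▸ hw.getLast_eq_of_pendant hv (by simp [hx]) hv₀ hnd he)

lemma IsCycleIn.diff_of_pendant (hv : ∀ e' ∈ I, v ∈ G.inc e' → e' = e)
    (hx : G.inc e = s(x, v)) (hxv : x ≠ v) {C : Set E} (hC : G.IsCycleIn I C) :
    G.IsCycleIn (I \ {e}) C ∧ v ∉ G.verts C := by
  obtain ⟨v₀, es, vs, hc, rfl⟩ := hC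
  have he := hc.not_mem_of_pendant hv hx hxv
  obtain ⟨⟨hw, hlast⟩, hne, hnde, hndv⟩ := hc
  refine ⟨⟨v₀, es, vs, ⟨⟨hw.diff_singleton he, hlast⟩, hne, hnde, hndv⟩, rfl⟩, ?_⟩
  rintro ⟨e', he', hve'⟩
  exact he (hv e' (hw.edge_mem he') hve' ▸ he')

/-- Walking along `e` into `v` and straight back is the only use a walk can make of `e`, so
deleting `e` just moves the start from `v` to `x`. -/
lemma IsWalk.reachable_diff_of_pendant [DecidableEq V] (hv : ∀ e' ∈ I, v ∈ G.inc e' → e' = e)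
    (hx : G.inc e = s(x, v)) (h : G.IsWalk I u es vs) :
    (u :: vs).getLast (by simp) ≠ v →
      G.Reachable (I \ {e}) (if u = v then x else u) ((u :: vs).getLast (by simp)) := by
  induction h with
  | nil u =>
    intro hu
    simp only [List.getLast_singleton] at hu ⊢
    rw [if_neg hu]
    exact .refl _ _
  | @cons u v₁ e₀ es vs hm hinc _ ih =>
    rw [List.getLast_cons_cons]
    intro hlast
    by_cases he₀ : e₀ = e
    · have hsame : (if u = v then x else u) = if v₁ = v then x else v₁ := by
        rw [he₀, hx, Sym2.eq_iff] at hinc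
        rcases hinc with ⟨rfl, rfl⟩ | ⟨rfl, rfl⟩ <;> simp
      exact hsame ▸ ih hlast
    · have hoff : v ∉ G.inc e₀ := fun h => he₀ (hv e₀ hm h)
      rw [hinc, Sym2.mem_iff, not_or] at hoff
      rw [if_neg (Ne.symm hoff.1)]
      rw [if_neg (Ne.symm hoff.2)] at ih
      exact .cons ⟨hm, he₀⟩ hinc (ih hlast)

lemma Reachable.diff_of_pendant (hv : ∀ e' ∈ I, v ∈ G.inc e' → e' = e)
    (hx : G.inc e = s(x, v)) {w : V} (h : G.Reachable I u w) (hu : u ≠ v) (hw : w ≠ v) :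
    G.Reachable (I \ {e}) u w := by
  classical
  obtain ⟨es, vs, hwalk, rfl⟩ := h
  simpa [hu] using hwalk.reachable_diff_of_pendant hv hx hw

lemma IsBicircularOf.exists_ne_mem_inc {M : Matroid E} (hM : G.IsBicircularOf M) {C : Set E}
    (hC : Circuit M C) (heC : e ∈ C) (hx : G.inc e = s(x, v)) (hxv : x ≠ v) :
    ∃ e' ∈ C, e' ≠ e ∧ v ∈ G.inc e' := by
  by_contra! hcon
  have hv : ∀ e' ∈ C, v ∈ G.inc e' → e' = e := fun e' he' hve' => by
    by_contra hne
    exact hcon e' he' hne hve'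
  have hnot : ¬ G.BicircIndep C := fun h => (Matroid.dep_iff.1 hC.1).1 ((hM.2 C).2 h)
  simp only [BicircIndep, not_forall] at hnot
  obtain ⟨C₁, C₂, hC₁, hC₂, ⟨a, b, ha, hb, hab⟩, hne⟩ := hnot
  obtain ⟨hC₁', hv₁⟩ := hC₁.diff_of_pendant hv hx hxv
  obtain ⟨hC₂', hv₂⟩ := hC₂.diff_of_pendant hv hx hxv
  have hab' : G.Reachable (C \ {e}) a b :=
    hab.diff_of_pendant hv hx (by rintro rfl; exact hv₁ ha) (by rintro rfl; exact hv₂ hb)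
  have hdep : M.Dep (C \ {e}) := by
    rw [Matroid.dep_iff, hM.1]
    refine ⟨fun hind => hne ?_, subset_univ _⟩
    exact (hM.2 _).1 hind C₁ C₂ hC₁' hC₂' ⟨a, b, ha, hb, hab'⟩
  exact hC.2 _ (sdiff_singleton_ssubset.2 heC) hdep

lemma eq_or_eq_of_degree_eq_two {D : Set E} (hfin : D.Finite) (hdeg : G.degree D x = 2)
    {a b : E} (ha : a ∈ D) (hb : b ∈ D) (hxa : x ∈ G.inc a) (hxb : x ∈ G.inc b) (hab : a ≠ b)
    (he : e ∈ D) (hxe : x ∈ G.inc e) : e = a ∨ e = b := by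
  have hle : {e ∈ D | x ∈ G.inc e}.ncard ≤ ({a, b} : Set E).ncard := by
    rw [ncard_pair hab]
    unfold degree at hdeg
    omega
  have hpair : {a, b} = {e ∈ D | x ∈ G.inc e} := by
    refine eq_of_subset_of_ncard_le ?_ hle (hfin.subset (sep_subset _ _))
    rintro e (rfl | rfl)
    exacts [⟨ha, hxa⟩, ⟨hb, hxb⟩]
  have hmem : e ∈ ({a, b} : Set E) := hpair ▸ ⟨he, hxe⟩
  simpa using hmem

lemma IsBicircularOf.mem_of_degree_eq_two {M : Matroid E} (hM : G.IsBicircularOf M)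
    {C D : Set E} (hfin : D.Finite) (hC : Circuit M C) (hCD : C ⊆ D) {y : V}
    (hdeg : G.degree D x = 2) {a b : E} (ha : a ∈ D) (hb : b ∈ D) (hab : a ≠ b)
    (hya : G.inc a = s(y, x)) (hyx : y ≠ x) (hxb : x ∈ G.inc b) (haC : a ∈ C) : b ∈ C := by
  obtain ⟨e', he'C, he'a, hxe'⟩ := hM.exists_ne_mem_inc hC haC hya hyx
  rcases eq_or_eq_of_degree_eq_two hfin hdeg ha hb (by simp [hya]) hxb hab (hCD he'C) hxe'
    with rfl | rfl
  exacts [absurd rfl he'a, he'C]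

lemma IsBicircularOf.mem_iff_mem_of_isWalk {M : Matroid E} (hM : G.IsBicircularOf M)
    {C D : Set E} (hfin : D.Finite) (hC : Circuit M C) (hCD : C ⊆ D) (h : G.IsWalk D u es vs) :
    (u :: vs).Nodup → (∀ y ∈ vs.dropLast, G.degree D y = 2) →
      ∀ a ∈ es, ∀ b ∈ es, (a ∈ C ↔ b ∈ C) := by
  induction h with
  | nil => simp
  | @cons u v₁ e₀ es vs hm hinc hrest ih =>
    intro hnd hint
    have ih' := ih (List.nodup_cons.1 hnd).2 fun y hy => hint y <| by
      cases vs with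
      | nil => simp at hy
      | cons => rw [List.dropLast_cons_cons]; exact List.mem_cons_of_mem _ hy
    cases hrest with
    | nil => simp
    | @cons _ v₂ e₁ es vs hm₁ hinc₁ hrest' =>
      simp only [List.nodup_cons, List.mem_cons, not_or] at hnd
      obtain ⟨⟨hu₁, hu₂, -⟩, ⟨hv₁₂, -⟩, -⟩ := hnd
      have hne : e₀ ≠ e₁ := by
        rintro rfl
        rw [hinc, Sym2.eq_iff] at hinc₁
        tauto
      have hdeg : G.degree D v₁ = 2 := hint v₁ (by simp)
      have hinc₁' : G.inc e₁ = s(v₂, v₁) := by rw [hinc₁, Sym2.eq_swap]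
      have hlink : e₀ ∈ C ↔ e₁ ∈ C :=
        ⟨hM.mem_of_degree_eq_two hfin hC hCD hdeg hm hm₁ hne hinc hu₁ (by simp [hinc₁]),
          hM.mem_of_degree_eq_two hfin hC hCD hdeg hm₁ hm hne.symm hinc₁' (Ne.symm hv₁₂)
            (by simp [hinc])⟩
      have hhead : ∀ c ∈ e₀ :: e₁ :: es, (c ∈ C ↔ e₁ ∈ C) := by
        rintro c (_ | ⟨_, hc⟩)
        exacts [hlink, ih' c hc e₁ (by simp)]
      exact fun a ha b hb => (hhead a ha).trans (hhead b hb).symm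

end Multigraph

lemma DoubleCircuit.nonempty {M : Matroid α} {D : Set α} (hD : DoubleCircuit M D) :
    D.Nonempty := by
  refine nonempty_of_encard_ne_zero fun h => ?_
  simpa [h] using hD.2.2.1

lemma CircuitPartition.exists_subset_of_forall_circuit {M : Matroid α} {D S : Set α} {k : ℕ}
    {f : Fin k → Set α} (hf : CircuitPartition M D f) (hD : D.Nonempty) (hSD : S ⊆ D)
    (hS : ∀ C, Circuit M C → C ⊆ D → ∀ a ∈ S, a ∈ C → S ⊆ C) : ∃ i, S ⊆ f i := by
  obtain ⟨-, hdisj, hunion, hcirc⟩ := hf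
  have hpart : ∀ a ∈ D, ∃ i, a ∈ f i := fun a ha => mem_iUnion.1 (hunion ▸ ha)
  rcases S.eq_empty_or_nonempty with rfl | ⟨s, hs⟩
  · obtain ⟨i, -⟩ := hpart _ hD.some_mem
    exact ⟨i, empty_subset _⟩
  obtain ⟨i, hsi⟩ := hpart s (hSD hs)
  refine ⟨i, fun b hb => ?_⟩
  obtain ⟨j, hbj⟩ := hpart b (hSD hb)
  by_contra hbi
  have hji : j ≠ i := by rintro rfl; exact hbi hbj
  obtain ⟨hC, hCD⟩ := (hcirc (D \ f j)).2 ⟨j, rfl⟩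
  have hsC : s ∈ D \ f j := ⟨hSD hs, disjoint_left.1 (hdisj i j hji.symm) hsi⟩
  exact (hS _ hC hCD s hs hsC hb).2 hbj

theorem subdivisionClass_subset_part_general {V E : Type*} (G : Multigraph V E) (M : Matroid E)
    (hM : Multigraph.IsBicircularOf G M) (D : Set E) (hD : DoubleCircuit M D)
    {k : ℕ} (f : Fin k → Set E) (hf : CircuitPartition M D f)
    (u w : V) (es : List E) (vs : List V) (hp : G.IsPath D u es vs w)
    (hint : ∀ x ∈ vs.dropLast, G.degree D x = 2) :
    ∃ i, {e | e ∈ es} ⊆ f i := by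
  obtain ⟨⟨hwalk, -⟩, hnd⟩ := hp
  refine hf.exists_subset_of_forall_circuit hD.nonempty (fun e he => hwalk.edge_mem he) ?_
  intro C hC hCD a ha haC b hb
  exact (hM.mem_iff_mem_of_isWalk hD.2.1 hC hCD hwalk hnd hint a ha b hb).1 haC

/-- A subdivision class of `G[D]` (the edge set of a path whose internal
vertices have degree `2` in `G[D]` and whose endpoints have degree `≥ 3`) is contained in a
single part of the circuit partition of the double circuit `D`. -/
theorem subdivisionClass_subset_part {V E : Type*} (G : Multigraph V E) (M : Matroid E)
    (hM : Multigraph.IsBicircularOf G M) (D : Set E) (hD : DoubleCircuit M D)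
    {k : ℕ} (f : Fin k → Set E) (hf : CircuitPartition M D f)
    (u w : V) (es : List E) (vs : List V) (hp : G.IsPath D u es vs w)
    (hint : ∀ x ∈ vs.dropLast, G.degree D x = 2)
    (hu : 3 ≤ G.degree D u) (hw : 3 ≤ G.degree D w) :
    ∃ i, {e | e ∈ es} ⊆ f i :=
  subdivisionClass_subset_part_general G M hM D hD f hf u w es vs hp hint

end Paper
end

section
/- Let G be a graph and D a double circuit of B(G) of degree k ≤ 4 whose circuit partition has at least k−1 singular parts. Then G contains a cycle of length at most 3. -/
open Set

namespace Paper

/-! ### Matroid notions -/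

variable {α : Type*}

lemma exists_forall_ne_of_card_sub_one_le {ι : Type*} [Fintype ι] [Nonempty ι] {p : ι → Prop}
    (h : Fintype.card ι - 1 ≤ {i | p i}.ncard) : ∃ j, ∀ i ≠ j, p i := by
  by_cases hall : ∀ i, p i
  · exact ⟨Classical.arbitrary ι, fun i _ => hall i⟩
  push Not at hall
  obtain ⟨j, hj⟩ := hall
  refine ⟨j, fun i hij => by_contra fun hi => ?_⟩
  have hpair : ({i, j} : Set ι) ⊆ {i | p i}ᶜ := by
    rintro x (rfl | rfl) <;> assumption
  have htwo := (ncard_pair hij).symm.trans_le (ncard_le_ncard hpair)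
  have hsum := ncard_add_ncard_compl {i | p i}
  rw [Nat.card_eq_fintype_card] at hsum
  omega

lemma encard_iUnion_diff_le_card_sub_one {ι α : Type*} [Fintype ι] (s : ι → Set α) {j : ι}
    (hs : ∀ i ≠ j, (s i).encard = 1) : ((⋃ i, s i) \ s j).encard ≤ (Fintype.card ι - 1 : ℕ) := by
  classical
  have hsub : (⋃ i, s i) \ s j ⊆ ⋃ i ∈ Finset.univ.erase j, s i := by
    rintro x ⟨hx, hxj⟩
    obtain ⟨i, hi⟩ := mem_iUnion.mp hx
    exact mem_biUnion (Finset.mem_erase.mpr ⟨fun h => hxj (h ▸ hi), Finset.mem_univ i⟩) hi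
  calc ((⋃ i, s i) \ s j).encard
      ≤ ∑ i ∈ Finset.univ.erase j, (s i).encard :=
        (encard_mono hsub).trans (Finset.set_encard_biUnion_le _ _)
    _ = (Fintype.card ι - 1 : ℕ) := by
        rw [Finset.sum_congr rfl fun i hi => hs i (Finset.ne_of_mem_erase hi)]
        simp [Finset.card_erase_of_mem]

namespace Multigraph

variable {V E : Type*} {G : Multigraph V E} {I J C : Set E}

lemma IsWalk.mono {u : V} {es : List E} {vs : List V} (h : G.IsWalk I u es vs) (hIJ : I ⊆ J) :
    G.IsWalk J u es vs := by
  induction h with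
  | nil v => exact .nil v
  | cons he hinc _ ih => exact .cons (hIJ he) hinc ih

lemma IsWalk.mem_of_mem {u : V} {es : List E} {vs : List V} (h : G.IsWalk I u es vs) {e : E}
    (he : e ∈ es) : e ∈ I := by
  induction h with
  | nil v => simp at he
  | cons hI _ _ ih =>
    rcases List.mem_cons.mp he with rfl | he
    exacts [hI, ih he]

lemma IsCycleIn.subset (h : G.IsCycleIn I C) : C ⊆ I := by
  obtain ⟨v, es, vs, ⟨⟨hwalk, -⟩, -⟩, rfl⟩ := h
  exact fun e he => hwalk.mem_of_mem he

lemma IsCycleIn.mono (h : G.IsCycleIn I C) (hIJ : I ⊆ J) : G.IsCycleIn J C := by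
  obtain ⟨v, es, vs, ⟨⟨hwalk, hlast⟩, hcycle⟩, rfl⟩ := h
  exact ⟨v, es, vs, ⟨⟨hwalk.mono hIJ, hlast⟩, hcycle⟩, rfl⟩

lemma exists_isCycleIn_of_not_bicircIndep (h : ¬ G.BicircIndep I) : ∃ C, G.IsCycleIn I C := by
  unfold BicircIndep at h
  push Not at h
  obtain ⟨C, -, hC, -⟩ := h
  exact ⟨C, hC⟩

lemma IsBicircularOf.exists_isCycleIn_subset_of_dep {M : Matroid E} (hM : G.IsBicircularOf M)
    {X : Set E} (hX : M.Dep X) : ∃ C ⊆ X, G.IsCycleIn univ C := by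
  obtain ⟨C, hC⟩ := exists_isCycleIn_of_not_bicircIndep ((hM.2 X).not.mp hX.not_indep)
  exact ⟨C, hC.subset, hC.mono (subset_univ X)⟩

end Multigraph

/-- If `D` is a double circuit of `B(G)` of degree `k ≤ 4` whose circuit
partition has at least `k - 1` singular parts, then `G` contains a cycle of length at
most `3`. -/
theorem doubleCircuit_low_degree_short_cycle {V E : Type*} (G : Multigraph V E)
    (M : Matroid E) (hM : Multigraph.IsBicircularOf G M) (D : Set E)
    (hD : DoubleCircuit M D) {k : ℕ} (f : Fin k → Set E) (hf : CircuitPartition M D f)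
    (hk : k ≤ 4) (hs : (k : ℕ) - 1 ≤ {i : Fin k | (f i).encard = 1}.ncard) :
    ∃ C : Set E, G.IsCycleIn univ C ∧ C.encard ≤ 3 := by
  obtain ⟨-, -, hunion, hcircuits⟩ := hf
  have : Nonempty (Fin k) := by
    obtain ⟨x, hx⟩ := hD.nonempty
    rw [← hunion] at hx
    obtain ⟨i, -⟩ := mem_iUnion.mp hx
    exact ⟨i⟩
  obtain ⟨j, hj⟩ := exists_forall_ne_of_card_sub_one_le (p := fun i => (f i).encard = 1)
    (by simpa using hs)
  have hcircuit : Circuit M (D \ f j) := ((hcircuits _).mpr ⟨j, rfl⟩).1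
  obtain ⟨C, hCD, hC⟩ := hM.exists_isCycleIn_subset_of_dep hcircuit.1
  refine ⟨C, hC, ?_⟩
  calc C.encard ≤ (D \ f j).encard := encard_mono hCD
    _ ≤ (k - 1 : ℕ) := by simpa [hunion] using encard_iUnion_diff_le_card_sub_one f hj
    _ ≤ 3 := by exact_mod_cast (by omega : k - 1 ≤ 3)

end Paper
end
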